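/- Tropical Kirchhoff formula, deletion part: For a loopless matroid M, element e, and weighting x : E → ℝ, the minimum weight of a basis of the deletion M\e equals mwb(M,x) - min{x(e), μ_e(x)} + μ_e(x). -/

import Mathlib

open Matroid Set

variable {α : Type*}

/-- A circuit of a matroid: a minimal dependent set. -/
def Matroid.IsCircuit' (M : Matroid α) (C : Set α) : Prop :=
  M.Dep C ∧ ∀ ⦃D⦄, D ⊂ C → M.Indep D

/-- Looplessness in the sense of the paper: no element is a loop
(every singleton of the ground set is independent) and no element is a
coloop (no element lies in all bases). -/
def Matroid.PaperLoopless (M : Matroid α) : Prop :=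
  ∀ e ∈ M.E, M.Indep {e} ∧ ∃ B, M.IsBase B ∧ e ∉ B

/-- The weight `x(B)` of a set of ground elements. -/
noncomputable def setWeight (x : α → ℝ) (B : Set α) : ℝ := ∑ᶠ e ∈ B, x e

/-- The min-max weight `μ_e(x)`: the minimum over circuits `C` containing `e`
of the maximum weight of an element of `C - e`. -/
noncomputable def muWeight (M : Matroid α) (x : α → ℝ) (e : α) : ℝ :=
  sInf {w | ∃ C, M.IsCircuit' C ∧ e ∈ C ∧ w = sSup (x '' (C \ {e}))}

/-- The bottleneck weight `b_e(x) = min {x(e), μ_e(x)}`. -/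
noncomputable def bottleneck (M : Matroid α) (x : α → ℝ) (e : α) : ℝ :=
  min (x e) (muWeight M x e)

/-- The minimum weight of a basis of `M`. -/
noncomputable def mwb (M : Matroid α) (x : α → ℝ) : ℝ :=
  sInf {w | ∃ B, M.IsBase B ∧ w = setWeight x B}

/-- `B` is an `x`-optimal basis of `M`. -/
def IsOptimalBase (M : Matroid α) (x : α → ℝ) (B : Set α) : Prop :=
  M.IsBase B ∧ ∀ B', M.IsBase B' → setWeight x B ≤ setWeight x B'

/-- Deletion of a single element. -/
noncomputable def Matroid.del (M : Matroid α) (e : α) : Matroid α :=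
  M ↾ (M.E \ {e})

/-- Contraction of a single element, defined by duality: `M/e = (M✶ \ e)✶`. -/
noncomputable def Matroid.con (M : Matroid α) (e : α) : Matroid α :=
  ((M✶ ↾ (M.E \ {e}))✶)

/-! Let `B` be an optimal basis of `M` and `μ = μ_e(x)`. If `e ∉ B` then `B` is also optimal
for `M \ e`. If `e ∈ B`, exchanging `e` for an element of a circuit realising `μ` gives a basis
of `M \ e` of weight at most `mwb M - x(e) + μ`. Conversely, for a basis `B'` of `M \ e`, swapping
`e` into `B'` against the heaviest element of its fundamental circuit gives a basis of `M`, so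
`mwb M ≤ x(B') - μ + x(e)`. Hence `mwb (M \ e) = max (mwb M) (mwb M - x(e) + μ)`. -/

lemma setWeight_insert_sdiff (x : α → ℝ) {B : Set α} {a b : α} (hB : B.Finite) (ha : a ∉ B)
    (hb : b ∈ B) : setWeight x (insert a (B \ {b})) = setWeight x B - x b + x a := by
  have hBb : setWeight x B = x b + setWeight x (B \ {b}) := by
    conv_lhs => rw [← insert_eq_of_mem hb, ← insert_sdiff_singleton]
    exact finsum_mem_insert x (by simp) hB.sdiff
  rw [hBb, setWeight, finsum_mem_insert x (fun h => ha h.1) hB.sdiff, setWeight]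
  ring

namespace Matroid

variable {M : Matroid α} {B C : Set α} {e : α}

lemma isCircuit'_iff : M.IsCircuit' C ↔ M.IsCircuit C :=
  isCircuit_iff_forall_ssubset.symm

instance del_finite [M.Finite] : (M.del e).Finite :=
  restrict_finite M.ground_finite.sdiff

lemma isBase_del_iff (he : e ∈ M.E) (hcol : ¬ M.IsColoop e) :
    (M.del e).IsBase B ↔ M.IsBase B ∧ e ∉ B := by
  obtain ⟨B₀, hB₀, heB₀⟩ : ∃ B₀, M.IsBase B₀ ∧ e ∉ B₀ := by
    simpa [isColoop_iff_forall_mem_isBase] using hcol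
  have hcoind : M.Coindep {e} :=
    coindep_iff_subset_compl_isBase.2 ⟨B₀, hB₀, by simpa using ⟨he, heB₀⟩⟩
  exact hcoind.delete_isBase_iff.trans (by rw [disjoint_singleton_right])

lemma IsBase.exists_exchange_mem_isCircuit (hB : M.IsBase B) (heB : e ∈ B)
    (hC : M.IsCircuit C) (heC : e ∈ C) :
    ∃ f ∈ C \ {e}, f ∉ B ∧ M.IsBase (insert f (B \ {e})) := by
  have hnsub : ¬ C \ {e} ⊆ M.closure (B \ {e}) := fun hsub =>
    hB.indep.notMem_closure_sdiff_of_mem heB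
      (M.closure_subset_closure_of_subset_closure hsub (hC.mem_closure_sdiff_singleton_of_mem heC))
  obtain ⟨f, hf, hfcl⟩ := not_subset.1 hnsub
  have hfE : f ∈ M.E := hC.subset_ground hf.1
  refine ⟨f, hf, fun hfB => hfcl (M.mem_closure_of_mem' ⟨hfB, hf.2⟩), ?_⟩
  exact hB.exchange_base_of_notMem_closure heB hfcl

lemma IsBase.insert_sdiff_isBase_of_mem_fundCircuit {g : α} (hB : M.IsBase B) (he : e ∈ M.E)
    (heB : e ∉ B) (hg : g ∈ M.fundCircuit e B \ {e}) : M.IsBase (insert e (B \ {g})) := by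
  have hecl : e ∈ M.closure B := by rwa [hB.closure_eq]
  have hind := (hB.indep.mem_fundCircuit_iff hecl heB).1 hg.1
  rw [← insert_sdiff_singleton_comm (Ne.symm hg.2)] at hind
  exact hB.exchange_isBase_of_indep heB hind

lemma IsCircuit.exists_mem_sdiff_eq_sSup [M.Finite] (hC : M.IsCircuit C) (hnl : M.IsNonloop e)
    (x : α → ℝ) : ∃ g ∈ C \ {e}, x g = sSup (x '' (C \ {e})) := by
  have hne : (C \ {e}).Nonempty :=
    sdiff_nonempty.2 fun hsub => hC.not_indep (hnl.indep.subset hsub)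
  exact (hne.image x).csSup_mem ((M.set_finite C hC.subset_ground).sdiff.image x)

lemma IsOptimalBase.mwb_eq {x : α → ℝ} (hB : IsOptimalBase M x B) : mwb M x = setWeight x B :=
  IsLeast.csInf_eq ⟨⟨B, hB.1, rfl⟩, by rintro _ ⟨B', hB', rfl⟩; exact hB.2 B' hB'⟩

lemma exists_isOptimalBase (M : Matroid α) [M.Finite] (x : α → ℝ) : ∃ B, IsOptimalBase M x B := by
  have hfin : {B | M.IsBase B}.Finite :=
    M.ground_finite.finite_subsets.subset fun B hB => hB.subset_ground
  obtain ⟨B, hB, hmin⟩ := exists_min_image _ (setWeight x) hfin M.exists_isBase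
  exact ⟨B, hB, hmin⟩

lemma mwb_le_setWeight [M.Finite] (x : α → ℝ) (hB : M.IsBase B) : mwb M x ≤ setWeight x B := by
  obtain ⟨B₀, hB₀⟩ := M.exists_isOptimalBase x
  exact hB₀.mwb_eq ▸ hB₀.2 B hB

lemma muWeight_le [M.Finite] (x : α → ℝ) (hC : M.IsCircuit C) (heC : e ∈ C) :
    muWeight M x e ≤ sSup (x '' (C \ {e})) := by
  have hfin : {w | ∃ C, M.IsCircuit' C ∧ e ∈ C ∧ w = sSup (x '' (C \ {e}))}.Finite := by
    refine (M.ground_finite.finite_subsets.image fun C => sSup (x '' (C \ {e}))).subset ?_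
    rintro _ ⟨C, hC, -, rfl⟩
    exact ⟨C, hC.1.subset_ground, rfl⟩
  exact csInf_le hfin.bddBelow ⟨C, isCircuit'_iff.2 hC, heC, rfl⟩

lemma exists_isCircuit_muWeight_eq [M.Finite] (x : α → ℝ) (h : ∃ C, M.IsCircuit C ∧ e ∈ C) :
    ∃ C, M.IsCircuit C ∧ e ∈ C ∧ muWeight M x e = sSup (x '' (C \ {e})) := by
  have hfin : {C | M.IsCircuit C ∧ e ∈ C}.Finite :=
    M.ground_finite.finite_subsets.subset fun C hC => hC.1.subset_ground
  obtain ⟨C₀, ⟨hC₀, heC₀⟩, hmin⟩ := exists_min_image _ (fun C => sSup (x '' (C \ {e}))) hfin h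
  refine ⟨C₀, hC₀, heC₀, IsLeast.csInf_eq ⟨⟨C₀, isCircuit'_iff.2 hC₀, heC₀, rfl⟩, ?_⟩⟩
  rintro _ ⟨C, hC, heC, rfl⟩
  exact hmin C ⟨isCircuit'_iff.1 hC, heC⟩

lemma mwb_le_mwb_del [M.Finite] (x : α → ℝ) (he : e ∈ M.E) (hcol : ¬ M.IsColoop e) :
    mwb M x ≤ mwb (M.del e) x := by
  obtain ⟨B, hB⟩ := (M.del e).exists_isOptimalBase x
  exact hB.mwb_eq ▸ mwb_le_setWeight x ((isBase_del_iff he hcol).1 hB.1).1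

lemma mwb_sub_add_muWeight_le_mwb_del [M.Finite] (x : α → ℝ) (hnl : M.IsNonloop e)
    (hcol : ¬ M.IsColoop e) : mwb M x - x e + muWeight M x e ≤ mwb (M.del e) x := by
  obtain ⟨B, hBopt⟩ := (M.del e).exists_isOptimalBase x
  obtain ⟨hB, heB⟩ := (isBase_del_iff hnl.mem_ground hcol).1 hBopt.1
  have hC : M.IsCircuit (M.fundCircuit e B) := hB.fundCircuit_isCircuit hnl.mem_ground heB
  obtain ⟨g, hg, hgmax⟩ := hC.exists_mem_sdiff_eq_sSup hnl x
  have hgB : g ∈ B := (M.fundCircuit_subset_insert e B hg.1).resolve_left hg.2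
  calc mwb M x - x e + muWeight M x e
      ≤ setWeight x (insert e (B \ {g})) - x e + x g := by
        gcongr
        · exact mwb_le_setWeight x (hB.insert_sdiff_isBase_of_mem_fundCircuit hnl.mem_ground heB hg)
        · exact hgmax ▸ muWeight_le x hC (M.mem_fundCircuit e B)
    _ = setWeight x B := by
        rw [setWeight_insert_sdiff x (M.set_finite B hB.subset_ground) heB hgB]
        ring
    _ = mwb (M.del e) x := hBopt.mwb_eq.symm

lemma mwb_del_le_max [M.Finite] (x : α → ℝ) (he : e ∈ M.E) (hcol : ¬ M.IsColoop e) :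
    mwb (M.del e) x ≤ max (mwb M x) (mwb M x - x e + muWeight M x e) := by
  obtain ⟨B, hBopt⟩ := M.exists_isOptimalBase x
  by_cases heB : e ∈ B
  · obtain ⟨C, hC, heC, hμ⟩ :=
      exists_isCircuit_muWeight_eq x (exists_mem_isCircuit_of_not_isColoop he hcol)
    obtain ⟨f, hf, hfB, hexch⟩ := hBopt.1.exists_exchange_mem_isCircuit heB hC heC
    have heB' : e ∉ insert f (B \ {e}) := by simpa using Ne.symm hf.2
    refine le_max_of_le_right ?_
    calc mwb (M.del e) x ≤ setWeight x (insert f (B \ {e})) :=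
          mwb_le_setWeight x ((isBase_del_iff he hcol).2 ⟨hexch, heB'⟩)
      _ = mwb M x - x e + x f := by
          rw [hBopt.mwb_eq, setWeight_insert_sdiff x (M.set_finite B hBopt.1.subset_ground) hfB heB]
      _ ≤ mwb M x - x e + muWeight M x e := by
          rw [hμ]
          gcongr
          exact le_csSup ((M.set_finite C hC.subset_ground).sdiff.image x).bddAbove ⟨f, hf, rfl⟩
  · exact le_max_of_le_left
      (hBopt.mwb_eq ▸ mwb_le_setWeight x ((isBase_del_iff he hcol).2 ⟨hBopt.1, heB⟩))

lemma mwb_del_eq_max [M.Finite] (x : α → ℝ) (hnl : M.IsNonloop e) (hcol : ¬ M.IsColoop e) :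
    mwb (M.del e) x = max (mwb M x) (mwb M x - x e + muWeight M x e) :=
  (mwb_del_le_max x hnl.mem_ground hcol).antisymm
    (max_le (mwb_le_mwb_del x hnl.mem_ground hcol) (mwb_sub_add_muWeight_le_mwb_del x hnl hcol))

end Matroid

/-- tropical Kirchhoff formula, deletion part. -/
theorem stmt10 (M : Matroid α) [M.Finite] (hM : M.PaperLoopless)
    (x : α → ℝ) {e : α} (he : e ∈ M.E) :
    mwb (M.del e) x = mwb M x - min (x e) (muWeight M x e) + muWeight M x e := by
  obtain ⟨hnl, B, hB, heB⟩ := hM e he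
  have hcol : ¬ M.IsColoop e := fun hcol => heB (hcol.mem_of_isBase hB)
  rw [M.mwb_del_eq_max x (indep_singleton.1 hnl) hcol]
  rcases le_total (x e) (muWeight M x e) with h | h
  · rw [min_eq_left h, max_eq_right (by linarith)]
  · rw [min_eq_right h, max_eq_left (by linarith)]
    ring
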